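/- Let H_A = (ℂ²)^{⊗N_A} and H_B be finite-dimensional Hilbert spaces, let E be a function on unit vectors of H_B with values in [0,1] (extended by E(0) = 0), and let f : [0,∞) → [0,∞) be a concave, monotonically increasing function such that |E(|ψ⟩) − E(|ψ'⟩)| ≤ f(‖ψ − ψ'‖₁) for all unit vectors |ψ⟩, |ψ'⟩ ∈ H_B and E(|ψ⟩) ≤ f(1) for all unit vectors |ψ⟩ ∈ H_B. Then for all unit vectors |Ψ⟩, |Ψ'⟩ ∈ H_A ⊗ H_B: |L^E(|Ψ⟩) − L^E(|Ψ'⟩)| ≤ f(2‖Ψ − Ψ'‖₁) + ‖Ψ − Ψ'‖₁, and likewise |L_global^E(|Ψ⟩) − L_global^E(|Ψ'⟩)| ≤ f(2‖Ψ − Ψ'‖₁) + ‖Ψ − Ψ'‖₁. -/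

import Mathlib

open scoped BigOperators ComplexConjugate ComplexOrder

noncomputable section

namespace QIpaper

/-- Inner product `⟨ψ|φ⟩`, conjugate-linear in the first argument. -/
def braket {I : Type*} [Fintype I] (ψ φ : I → ℂ) : ℂ := ∑ x, conj (ψ x) * φ x

/-- Outer product `|ψ⟩⟨ψ|`. -/
def dm {I : Type*} (ψ : I → ℂ) : Matrix I I ℂ := Matrix.of fun x y => ψ x * conj (ψ y)

open Classical in
/-- Positive semidefinite square root (junk value `0` on non-PSD matrices). -/
def psdSqrt {I : Type*} [Fintype I] [DecidableEq I] (A : Matrix I I ℂ) : Matrix I I ℂ :=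
  if h : A.PosSemidef then
    (h.1.eigenvectorUnitary : Matrix I I ℂ) *
      Matrix.diagonal (fun i => ((Real.sqrt (h.1.eigenvalues i) : ℝ) : ℂ)) *
      (star h.1.eigenvectorUnitary : Matrix I I ℂ) else 0

/-- The trace norm `‖A‖₁ = tr √(AᴴA)`. -/
def traceNorm {I : Type*} [Fintype I] [DecidableEq I] (A : Matrix I I ℂ) : ℝ :=
  (psdSqrt (A.conjTranspose * A)).trace.re

/-- Fidelity `F(ρ,σ) = tr √(√ρ σ √ρ)`. -/
def fidelity {I : Type*} [Fintype I] [DecidableEq I] (ρ σ : Matrix I I ℂ) : ℝ :=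
  (psdSqrt (psdSqrt ρ * σ * psdSqrt ρ)).trace.re

/-- Purity `tr(ρ²)`. -/
def purity {I : Type*} [Fintype I] (ρ : Matrix I I ℂ) : ℝ := ((ρ * ρ).trace).re

def sigmaX : Matrix (Fin 2) (Fin 2) ℂ := !![0, 1; 1, 0]
def sigmaY : Matrix (Fin 2) (Fin 2) ℂ := !![0, -Complex.I; Complex.I, 0]
def sigmaZ : Matrix (Fin 2) (Fin 2) ℂ := !![1, 0; 0, -1]

/-- `σ_y^{⊗I}` on the qubits indexed by `I`. -/
def sigmaYn {I : Type*} [Fintype I] [DecidableEq I] : Matrix (I → Fin 2) (I → Fin 2) ℂ :=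
  Matrix.of fun x y => ∏ k, sigmaY (x k) (y k)

/-- The `n`-tangle `τ(ψ) = |⟨ψ|σ_y^{⊗n}|ψ*⟩|`. -/
def tangle {I : Type*} [Fintype I] [DecidableEq I] (ψ : (I → Fin 2) → ℂ) : ℝ :=
  ‖∑ x, ∑ y, conj (ψ x) * sigmaYn x y * conj (ψ y)‖

/-- Entrywise complex conjugate of a matrix. -/
def conjM {I J : Type*} (ρ : Matrix I J ℂ) : Matrix I J ℂ := Matrix.of fun x y => conj (ρ x y)

/-- `ρ̃ = σ_y^{⊗n} ρ* σ_y^{⊗n}`. -/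
def tildeM {I : Type*} [Fintype I] [DecidableEq I] (ρ : Matrix (I → Fin 2) (I → Fin 2) ℂ) :
    Matrix (I → Fin 2) (I → Fin 2) ℂ := sigmaYn * conjM ρ * sigmaYn

/-- The Wootters tilde `|ψ̃⟩ = σ_y^{⊗n}|ψ*⟩`. -/
def wtilde {I : Type*} [Fintype I] [DecidableEq I] (ψ : (I → Fin 2) → ℂ) : (I → Fin 2) → ℂ :=
  sigmaYn.mulVec (fun x => conj (ψ x))

/-- Reduced density matrix of the pure state `ψ` on the qubits in `s`
(tracing out the complement). -/
def reduced {n : ℕ} (s : Finset (Fin n)) (ψ : (Fin n → Fin 2) → ℂ) :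
    Matrix ({i : Fin n // i ∈ s} → Fin 2) ({i : Fin n // i ∈ s} → Fin 2) ℂ :=
  Matrix.of fun a b => ∑ c : {i : Fin n // i ∉ s} → Fin 2,
    ψ (fun i => if h : i ∈ s then a ⟨i, h⟩ else c ⟨i, h⟩) *
    conj (ψ (fun i => if h : i ∈ s then b ⟨i, h⟩ else c ⟨i, h⟩))

/-- GME-concurrence `C_GME(ψ) = min_{∅ ⊊ γ ⊊ [n]} √(2(1 − tr ψ_γ²))`. -/
def gme {n : ℕ} (ψ : (Fin n → Fin 2) → ℂ) : ℝ :=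
  sInf {r : ℝ | ∃ γ : Finset (Fin n), γ ≠ ∅ ∧ γ ≠ Finset.univ ∧
    r = Real.sqrt (2 * (1 - purity (reduced γ ψ)))}

/-- Concentratable entanglement `C(ψ; s) = 1 − 2^{−|s|} Σ_{γ⊆s} tr(ψ_γ²)`. -/
def CE {n : ℕ} (ψ : (Fin n → Fin 2) → ℂ) (s : Finset (Fin n)) : ℝ :=
  1 - (1 / 2 ^ s.card) * ∑ γ ∈ s.powerset, purity (reduced γ ψ)

/-- The subnormalized post-measurement vector `(⟨v|⊗I)|Ψ⟩`. -/
def contract {IA IB : Type*} [Fintype IA] (v : IA → ℂ) (Ψ : IA × IB → ℂ) : IB → ℂ :=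
  fun y => ∑ x, conj (v x) * Ψ (x, y)

/-- Probability `p_v = ⟨Ψ|(|v⟩⟨v| ⊗ I)|Ψ⟩` of outcome `v`. -/
def prob {IA IB : Type*} [Fintype IA] [Fintype IB] (v : IA → ℂ) (Ψ : IA × IB → ℂ) : ℝ :=
  (braket (contract v Ψ) (contract v Ψ)).re

/-- Normalized post-measurement state (the zero vector when the probability vanishes). -/
def postState {IA IB : Type*} [Fintype IA] [Fintype IB] (v : IA → ℂ) (Ψ : IA × IB → ℂ) :
    IB → ℂ := fun y => ((Real.sqrt (prob v Ψ) : ℂ))⁻¹ * contract v Ψ y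

/-- `b` is an orthonormal family. (An orthonormal family indexed by the space's own
index type is an orthonormal basis.) -/
def ONB {J I : Type*} [Fintype I] [DecidableEq J] (b : J → I → ℂ) : Prop :=
  ∀ i j, braket (b i) (b j) = if i = j then 1 else 0

/-- Average post-measurement entanglement `Ē_β(Ψ) = Σ_i p_i E(φ_i)`. -/
def avgE {ι IA IB : Type*} [Fintype ι] [Fintype IA] [Fintype IB]
    (E : (IB → ℂ) → ℝ) (b : ι → IA → ℂ) (Ψ : IA × IB → ℂ) : ℝ :=
  ∑ i, prob (b i) Ψ * E (postState (b i) Ψ)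

/-- Multipartite entanglement of assistance: supremum of `Ē_β` over all
orthonormal bases `β` of `H_A`. -/
def Lglobal {IA IB : Type*} [Fintype IA] [Fintype IB] [DecidableEq IA]
    (E : (IB → ℂ) → ℝ) (Ψ : IA × IB → ℂ) : ℝ :=
  sSup {r : ℝ | ∃ b : IA → IA → ℂ, ONB b ∧ r = avgE E b Ψ}

/-- Tensor-product basis of `(ℂ²)^{⊗K}` built from single-qubit bases. -/
def productBasis {K : Type*} [Fintype K] (q : K → Fin 2 → Fin 2 → ℂ) :
    (K → Fin 2) → (K → Fin 2) → ℂ :=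
  fun i x => ∏ k, q k (i k) (x k)

/-- Localizable multipartite entanglement: supremum of `Ē_β` over product bases of
single-qubit orthonormal bases of `H_A = (ℂ²)^{⊗K}`. -/
def Lloc {K IB : Type*} [Fintype K] [DecidableEq K] [Fintype IB]
    (E : (IB → ℂ) → ℝ) (Ψ : (K → Fin 2) × IB → ℂ) : ℝ :=
  sSup {r : ℝ | ∃ q : K → Fin 2 → Fin 2 → ℂ, (∀ k, ONB (q k)) ∧
    r = avgE E (productBasis q) Ψ}

/-- Partial trace over the `A` system of `|Ψ⟩⟨Ψ|`. -/
def ptraceA {IA IB : Type*} [Fintype IA] (Ψ : IA × IB → ℂ) : Matrix IB IB ℂ :=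
  Matrix.of fun y y' => ∑ x, Ψ (x, y) * conj (Ψ (x, y'))

/-- Reduced density matrix of `|Ψ⟩⟨Ψ|` on the subset `s` of the `B` qubits. -/
def reducedB {IA : Type*} [Fintype IA] {n : ℕ} (s : Finset (Fin n))
    (Ψ : IA × (Fin n → Fin 2) → ℂ) :
    Matrix ({i : Fin n // i ∈ s} → Fin 2) ({i : Fin n // i ∈ s} → Fin 2) ℂ :=
  Matrix.of fun a b => ∑ x : IA, ∑ c : {i : Fin n // i ∉ s} → Fin 2,
    Ψ (x, fun i => if h : i ∈ s then a ⟨i, h⟩ else c ⟨i, h⟩) *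
    conj (Ψ (x, fun i => if h : i ∈ s then b ⟨i, h⟩ else c ⟨i, h⟩))


section Helpers
open Matrix
open scoped MatrixOrder
variable {I : Type*} [Fintype I] [DecidableEq I]

lemma psdSqrt_of_posSemidef {A : Matrix I I ℂ} (h : A.PosSemidef) :
    psdSqrt A = CFC.sqrt A := by
  rw [psdSqrt, dif_pos h, CFC.sqrt_eq_cfc, cfc_nnreal_eq_real _ A h.nonneg, h.1.cfc_eq]
  simp only [IsHermitian.cfc, Unitary.conjStarAlgAut_apply]
  congr 3
  funext i
  simp [Real.coe_sqrt, max_eq_left (h.eigenvalues_nonneg i)]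

lemma traceNorm_eq_sum_abs {Δ : Matrix I I ℂ} (hΔ : Δ.IsHermitian) :
    traceNorm Δ = ∑ i, |hΔ.eigenvalues i| := by
  set U : Matrix I I ℂ := (hΔ.eigenvectorUnitary : Matrix I I ℂ) with hUdef
  have hU1 : star U * U = 1 := Matrix.mem_unitaryGroup_iff'.mp hΔ.eigenvectorUnitary.2
  have hDiag : ∀ (d e : I → ℝ),
      (U * diagonal ((RCLike.ofReal : ℝ → ℂ) ∘ d) * star U) *
        (U * diagonal ((RCLike.ofReal : ℝ → ℂ) ∘ e) * star U)
        = U * diagonal ((RCLike.ofReal : ℝ → ℂ) ∘ fun i => d i * e i) * star U := by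
    intro d e
    have hfun : (fun i => ((RCLike.ofReal : ℝ → ℂ) ∘ d) i * ((RCLike.ofReal : ℝ → ℂ) ∘ e) i)
        = ((RCLike.ofReal : ℝ → ℂ) ∘ fun i => d i * e i) := by
      funext i; simp [Function.comp, RCLike.ofReal_mul]
    calc (U * diagonal ((RCLike.ofReal : ℝ → ℂ) ∘ d) * star U) *
          (U * diagonal ((RCLike.ofReal : ℝ → ℂ) ∘ e) * star U)
        = U * (diagonal ((RCLike.ofReal : ℝ → ℂ) ∘ d) * (star U * U) *
            diagonal ((RCLike.ofReal : ℝ → ℂ) ∘ e)) * star U := by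
          simp only [Matrix.mul_assoc]
      _ = U * diagonal ((RCLike.ofReal : ℝ → ℂ) ∘ fun i => d i * e i) * star U := by
          rw [hU1, Matrix.mul_one, diagonal_mul_diagonal, hfun, Matrix.mul_assoc]
  set B : Matrix I I ℂ :=
    U * diagonal ((RCLike.ofReal : ℝ → ℂ) ∘ fun i => |hΔ.eigenvalues i|) * star U with hBdef
  have hB : B.PosSemidef := by
    have := PosSemidef.mul_mul_conjTranspose_same
      (posSemidef_diagonal_iff.mpr (fun i => by
        show (0:ℂ) ≤ ((|hΔ.eigenvalues i| : ℝ) : ℂ)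
        exact_mod_cast Complex.zero_le_real.mpr (abs_nonneg _))) U
    rw [← Matrix.star_eq_conjTranspose] at this
    exact this
  have hsp := hΔ.spectral_theorem
  rw [Unitary.conjStarAlgAut_apply] at hsp
  have h2 : Δᴴ * Δ = U * diagonal ((RCLike.ofReal : ℝ → ℂ) ∘ fun i =>
      hΔ.eigenvalues i * hΔ.eigenvalues i) * star U := by
    rw [hΔ.eq, ← hDiag, hUdef, ← hsp]
  have hsq : B ^ 2 = Δᴴ * Δ := by
    rw [pow_two, hBdef, hDiag, h2]
    congr 2
    funext i
    simp [abs_mul_abs_self]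
  have hPSD : (Δᴴ * Δ).PosSemidef := posSemidef_conjTranspose_mul_self Δ
  have hBs : B = CFC.sqrt (Δᴴ * Δ) :=
    (CFC.sqrt_unique (by rw [← pow_two]; exact hsq) hB.nonneg).symm
  have htr : B.trace = ∑ i, ((|hΔ.eigenvalues i| : ℝ) : ℂ) := by
    rw [hBdef, trace_mul_cycle, hU1, Matrix.one_mul, trace_diagonal]
    rfl
  rw [traceNorm, psdSqrt_of_posSemidef hPSD, ← hBs, htr, Complex.re_sum]
  simp


lemma re_trace_mul_le_traceNorm {Δ S : Matrix I I ℂ} (hΔ : Δ.IsHermitian)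
    (hS : Sᴴ * S = 1) : ((S * Δ).trace).re ≤ traceNorm Δ := by
  set U : Matrix I I ℂ := (hΔ.eigenvectorUnitary : Matrix I I ℂ) with hUdef
  have hU1 : Uᴴ * U = 1 := by
    rw [← Matrix.star_eq_conjTranspose]
    exact Matrix.mem_unitaryGroup_iff'.mp hΔ.eigenvectorUnitary.2
  have hU2 : U * Uᴴ = 1 := by
    rw [← Matrix.star_eq_conjTranspose]
    exact Matrix.mem_unitaryGroup_iff.mp hΔ.eigenvectorUnitary.2
  set M : Matrix I I ℂ := Uᴴ * S * U with hMdef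
  have hM : Mᴴ * M = 1 := by
    rw [hMdef]
    calc (Uᴴ * S * U)ᴴ * (Uᴴ * S * U)
        = Uᴴ * (Sᴴ * ((U * Uᴴ) * (S * U))) := by
          simp only [Matrix.conjTranspose_mul, Matrix.conjTranspose_conjTranspose,
            Matrix.mul_assoc]
      _ = Uᴴ * ((Sᴴ * S) * U) := by rw [hU2, Matrix.one_mul, Matrix.mul_assoc]
      _ = 1 := by rw [hS, Matrix.one_mul, hU1]
  have hMM : M * Mᴴ = 1 := mul_eq_one_comm.mp hM
  have hd : ∀ k, |(M k k).re| ≤ 1 := by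
    intro k
    have h1 : ∑ b, Complex.normSq (M k b) = 1 := by
      have := congrArg (fun X : Matrix I I ℂ => (X k k).re) hMM
      simpa [Matrix.mul_apply, Matrix.conjTranspose_apply, Matrix.one_apply,
        Complex.re_sum, Complex.mul_conj, ← Complex.normSq_eq_norm_sq] using this
    have h2 : Complex.normSq (M k k) ≤ 1 := by
      rw [← h1]
      exact Finset.single_le_sum (fun b _ => Complex.normSq_nonneg _) (Finset.mem_univ k)
    calc |(M k k).re| ≤ ‖M k k‖ := Complex.abs_re_le_norm _
      _ = Real.sqrt (Complex.normSq (M k k)) := Complex.norm_def _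
      _ ≤ Real.sqrt 1 := Real.sqrt_le_sqrt h2
      _ = 1 := Real.sqrt_one
  have hsp := hΔ.spectral_theorem
  rw [Unitary.conjStarAlgAut_apply] at hsp
  set D : Matrix I I ℂ := diagonal ((RCLike.ofReal : ℝ → ℂ) ∘ hΔ.eigenvalues) with hDdef
  have htr : (S * Δ).trace = (M * D).trace := by
    have h0 : S * Δ = S * (U * D * Uᴴ) := by
      rw [hUdef, ← Matrix.star_eq_conjTranspose, ← hsp]
    rw [h0, show S * (U * D * Uᴴ) = (S * U * D) * Uᴴ by simp only [Matrix.mul_assoc],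
      Matrix.trace_mul_comm, hMdef]
    simp only [Matrix.mul_assoc]
  have htr2 : (M * D).trace = ∑ k, M k k * ((hΔ.eigenvalues k : ℝ) : ℂ) := by
    simp [Matrix.trace, Matrix.diag, Matrix.mul_diagonal, hDdef]
  rw [htr, htr2, traceNorm_eq_sum_abs hΔ, Complex.re_sum]
  apply Finset.sum_le_sum
  intro k _
  have : (M k k * ((hΔ.eigenvalues k : ℝ) : ℂ)).re = (M k k).re * hΔ.eigenvalues k := by
    simp [Complex.mul_re]
  rw [this]
  calc (M k k).re * hΔ.eigenvalues k ≤ |(M k k).re * hΔ.eigenvalues k| := le_abs_self _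
    _ = |(M k k).re| * |hΔ.eigenvalues k| := abs_mul _ _
    _ ≤ 1 * |hΔ.eigenvalues k| := by
        exact mul_le_mul_of_nonneg_right (hd k) (abs_nonneg _)
    _ = |hΔ.eigenvalues k| := one_mul _

lemma exists_sign_matrix {Δ : Matrix I I ℂ} (hΔ : Δ.IsHermitian) :
    ∃ S : Matrix I I ℂ, Sᴴ = S ∧ S * S = 1 ∧ ((S * Δ).trace).re = traceNorm Δ := by
  classical
  set U : Matrix I I ℂ := (hΔ.eigenvectorUnitary : Matrix I I ℂ) with hUdef
  have hU1 : Uᴴ * U = 1 := by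
    rw [← Matrix.star_eq_conjTranspose]
    exact Matrix.mem_unitaryGroup_iff'.mp hΔ.eigenvectorUnitary.2
  have hU2 : U * Uᴴ = 1 := by
    rw [← Matrix.star_eq_conjTranspose]
    exact Matrix.mem_unitaryGroup_iff.mp hΔ.eigenvectorUnitary.2
  set s : I → ℝ := fun k => if hΔ.eigenvalues k < 0 then (-1 : ℝ) else 1 with hsdef
  refine ⟨U * diagonal ((RCLike.ofReal : ℝ → ℂ) ∘ s) * Uᴴ, ?_, ?_, ?_⟩
  · have hst : star ((RCLike.ofReal : ℝ → ℂ) ∘ s) = ((RCLike.ofReal : ℝ → ℂ) ∘ s) := by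
      funext k
      simp [Pi.star_apply, RCLike.star_def, RCLike.conj_ofReal]
    simp only [Matrix.conjTranspose_mul, Matrix.conjTranspose_conjTranspose,
      Matrix.diagonal_conjTranspose, hst, Matrix.mul_assoc]
  · calc (U * diagonal ((RCLike.ofReal : ℝ → ℂ) ∘ s) * Uᴴ) *
        (U * diagonal ((RCLike.ofReal : ℝ → ℂ) ∘ s) * Uᴴ)
        = U * (diagonal ((RCLike.ofReal : ℝ → ℂ) ∘ s) * (Uᴴ * U) *
            diagonal ((RCLike.ofReal : ℝ → ℂ) ∘ s)) * Uᴴ := by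
          simp only [Matrix.mul_assoc]
      _ = U * (diagonal ((RCLike.ofReal : ℝ → ℂ) ∘ s) *
            diagonal ((RCLike.ofReal : ℝ → ℂ) ∘ s)) * Uᴴ := by rw [hU1, Matrix.mul_one]
      _ = U * 1 * Uᴴ := by
          rw [diagonal_mul_diagonal]
          have hone : (fun i => ((RCLike.ofReal : ℝ → ℂ) ∘ s) i *
              ((RCLike.ofReal : ℝ → ℂ) ∘ s) i) = fun _ => (1:ℂ) := by
            funext i
            by_cases h : hΔ.eigenvalues i < 0 <;> simp [hsdef, h]
          rw [hone]
          congr 1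
      _ = 1 := by rw [Matrix.mul_one, hU2]
  · have hsp := hΔ.spectral_theorem
    have h1 : Δ = U * diagonal ((RCLike.ofReal : ℝ → ℂ) ∘ hΔ.eigenvalues) * Uᴴ := by
      rw [hUdef, ← Matrix.star_eq_conjTranspose]; exact hsp
    have hXD : (U * diagonal ((RCLike.ofReal : ℝ → ℂ) ∘ s) * Uᴴ) *
        (U * diagonal ((RCLike.ofReal : ℝ → ℂ) ∘ hΔ.eigenvalues) * Uᴴ)
        = U * (diagonal ((RCLike.ofReal : ℝ → ℂ) ∘ s) *
            diagonal ((RCLike.ofReal : ℝ → ℂ) ∘ hΔ.eigenvalues)) * Uᴴ := by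
      calc (U * diagonal ((RCLike.ofReal : ℝ → ℂ) ∘ s) * Uᴴ) *
          (U * diagonal ((RCLike.ofReal : ℝ → ℂ) ∘ hΔ.eigenvalues) * Uᴴ)
          = U * (diagonal ((RCLike.ofReal : ℝ → ℂ) ∘ s) * (Uᴴ * U) *
              diagonal ((RCLike.ofReal : ℝ → ℂ) ∘ hΔ.eigenvalues)) * Uᴴ := by
            simp only [Matrix.mul_assoc]
        _ = _ := by rw [hU1, Matrix.mul_one]
    have h0 : (U * diagonal ((RCLike.ofReal : ℝ → ℂ) ∘ s) * Uᴴ) * Δ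
        = U * (diagonal ((RCLike.ofReal : ℝ → ℂ) ∘ s) *
            diagonal ((RCLike.ofReal : ℝ → ℂ) ∘ hΔ.eigenvalues)) * Uᴴ :=
      (congrArg (fun Z => (U * diagonal ((RCLike.ofReal : ℝ → ℂ) ∘ s) * Uᴴ) * Z) h1).trans hXD
    rw [h0, Matrix.trace_mul_cycle, ← Matrix.mul_assoc, hU1, Matrix.one_mul,
      diagonal_mul_diagonal, trace_diagonal, traceNorm_eq_sum_abs hΔ, Complex.re_sum]
    apply Finset.sum_congr rfl
    intro k _
    by_cases h : hΔ.eigenvalues k < 0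
    · simp [hsdef, h, abs_of_neg h, Complex.mul_re]
    · simp [hsdef, h, abs_of_nonneg (not_lt.mp h), Complex.mul_re]


lemma isHermitian_dm (ψ : I → ℂ) : (dm ψ).IsHermitian := by
  ext x y
  simp [dm, Matrix.conjTranspose_apply, mul_comm]

lemma posSemidef_dm (ψ : I → ℂ) : (dm ψ).PosSemidef := by
  refine Matrix.PosSemidef.of_dotProduct_mulVec_nonneg (isHermitian_dm ψ) fun x => ?_
  have h1 : star x ⬝ᵥ dm ψ *ᵥ x
      = (∑ a, conj (x a) * ψ a) * (∑ b, conj (ψ b) * x b) := by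
    simp only [dotProduct, Matrix.mulVec, dm, Matrix.of_apply, Pi.star_apply,
      Finset.sum_mul, Finset.mul_sum]
    rw [Finset.sum_comm]
    apply Finset.sum_congr rfl
    intro a _
    apply Finset.sum_congr rfl
    intro b _
    simp only [Complex.star_def]
    ring
  have h2 : (∑ a, conj (x a) * ψ a) = conj (∑ b, conj (ψ b) * x b) := by
    rw [map_sum]
    apply Finset.sum_congr rfl
    intro b _
    simp [mul_comm]
  rw [h1, h2]
  set z := ∑ b, conj (ψ b) * x b
  have : conj z * z = ((Complex.normSq z : ℝ) : ℂ) := by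
    rw [mul_comm, Complex.mul_conj]
  rw [this]
  exact Complex.zero_le_real.mpr (Complex.normSq_nonneg _)

lemma traceNorm_of_posSemidef {A : Matrix I I ℂ} (hA : A.PosSemidef) :
    traceNorm A = A.trace.re := by
  have hPSD : (Aᴴ * A).PosSemidef := posSemidef_conjTranspose_mul_self A
  have hs : A = CFC.sqrt (Aᴴ * A) := (CFC.sqrt_unique
    (by exact (congrArg (fun X => X * A) hA.1.eq).symm) hA.nonneg).symm
  rw [traceNorm, psdSqrt_of_posSemidef hPSD, ← hs]

lemma traceNorm_dm (ψ : I → ℂ) : traceNorm (dm ψ) = (braket ψ ψ).re := by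
  rw [traceNorm_of_posSemidef (posSemidef_dm ψ)]
  congr 1
  simp [Matrix.trace, Matrix.diag, dm, braket, mul_comm]

lemma traceNorm_nonneg' {Δ : Matrix I I ℂ} (hΔ : Δ.IsHermitian) : 0 ≤ traceNorm Δ := by
  rw [traceNorm_eq_sum_abs hΔ]
  positivity

lemma traceNorm_neg (A : Matrix I I ℂ) : traceNorm (-A) = traceNorm A := by
  unfold traceNorm
  rw [Matrix.conjTranspose_neg, Matrix.neg_mul, Matrix.mul_neg, neg_neg]

lemma traceNorm_add_le {A B : Matrix I I ℂ} (hA : A.IsHermitian) (hB : B.IsHermitian) :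
    traceNorm (A + B) ≤ traceNorm A + traceNorm B := by
  obtain ⟨S, hS1, hS2, hS3⟩ := exists_sign_matrix (hA.add hB)
  have hSS : Sᴴ * S = 1 := by rw [hS1]; exact hS2
  rw [← hS3, Matrix.mul_add, Matrix.trace_add, Complex.add_re]
  exact add_le_add (re_trace_mul_le_traceNorm hA hSS) (re_trace_mul_le_traceNorm hB hSS)

lemma traceNorm_smul_nonneg {c : ℝ} (hc : 0 ≤ c) (A : Matrix I I ℂ) :
    traceNorm ((c : ℂ) • A) = c * traceNorm A := by
  have hM : (Aᴴ * A).PosSemidef := posSemidef_conjTranspose_mul_self A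
  have h1 : ((c:ℂ) • A)ᴴ * ((c:ℂ) • A) = ((c * c : ℝ) : ℂ) • (Aᴴ * A) := by
    rw [Matrix.conjTranspose_smul, Matrix.smul_mul, Matrix.mul_smul, smul_smul,
      Complex.ofReal_mul]
    congr 2
    simp [Complex.conj_ofReal]
  have hBpsd : ((c:ℂ) • CFC.sqrt (Aᴴ * A)).PosSemidef :=
    (CFC.sqrt_nonneg (Aᴴ * A)).posSemidef.smul (Complex.zero_le_real.mpr hc)
  have hsq : ((c:ℂ) • CFC.sqrt (Aᴴ * A)) ^ 2 = ((c:ℂ) • A)ᴴ * ((c:ℂ) • A) := by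
    rw [h1, pow_two, Matrix.smul_mul, Matrix.mul_smul, smul_smul,
      CFC.sqrt_mul_sqrt_self (Aᴴ * A) hM.nonneg, ← Complex.ofReal_mul]
  have hM2 : (((c:ℂ) • A)ᴴ * ((c:ℂ) • A)).PosSemidef := posSemidef_conjTranspose_mul_self _
  have hBs : (c:ℂ) • CFC.sqrt (Aᴴ * A) = CFC.sqrt (((c:ℂ) • A)ᴴ * ((c:ℂ) • A)) :=
    (CFC.sqrt_unique (by rw [← pow_two]; exact hsq) hBpsd.nonneg).symm
  rw [traceNorm, psdSqrt_of_posSemidef hM2, ← hBs, Matrix.trace_smul, traceNorm,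
    psdSqrt_of_posSemidef hM]
  simp [smul_eq_mul, Complex.mul_re]

lemma traceNorm_real_smul (c : ℝ) (A : Matrix I I ℂ) :
    traceNorm ((c : ℂ) • A) = |c| * traceNorm A := by
  rcases le_or_gt 0 c with hc | hc
  · rw [traceNorm_smul_nonneg hc, abs_of_nonneg hc]
  · have h1 : (c : ℂ) • A = -(((-c : ℝ) : ℂ) • A) := by
      push_cast
      simp [neg_smul]
    rw [h1, traceNorm_neg, traceNorm_smul_nonneg (by linarith : (0:ℝ) ≤ -c),
      abs_of_neg hc]


section Chunk3
open Kronecker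
variable {IA IB : Type*} [Fintype IA] [DecidableEq IA] [Fintype IB] [DecidableEq IB]

lemma ONB.sum_dm {b : IA → IA → ℂ} (hb : ONB b) : ∑ i, dm (b i) = 1 := by
  set M : Matrix IA IA ℂ := Matrix.of (fun i x => conj (b i x)) with hMdef
  have h1 : M * Mᴴ = 1 := by
    ext i j
    have := hb i j
    simpa [hMdef, Matrix.mul_apply, Matrix.conjTranspose_apply, Matrix.one_apply,
      braket] using this
  have h2 : Mᴴ * M = 1 := mul_eq_one_comm.mp h1
  ext x y
  have h3 : (Mᴴ * M) x y = (1 : Matrix IA IA ℂ) x y := by rw [h2]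
  simpa [hMdef, Matrix.mul_apply, Matrix.conjTranspose_apply, dm, Matrix.sum_apply]
    using h3

lemma dm_mul_dm (u v : IA → ℂ) :
    dm u * dm v = braket u v • Matrix.of (fun x y => u x * conj (v y)) := by
  ext x y
  simp only [Matrix.mul_apply, dm, Matrix.of_apply, Matrix.smul_apply, braket,
    smul_eq_mul, Finset.sum_mul, Finset.mul_sum]
  apply Finset.sum_congr rfl
  intro z _
  ring

lemma ONB.dm_mul_dm {b : IA → IA → ℂ} (hb : ONB b) (i j : IA) :
    dm (b i) * dm (b j) = if i = j then dm (b i) else 0 := by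
  rw [QIpaper.dm_mul_dm, hb i j]
  by_cases h : i = j
  · subst h
    simp [dm]
  · simp [h]

lemma sum_kron {ι : Type*} [Fintype ι] (A : ι → Matrix IA IA ℂ) (B : Matrix IB IB ℂ) :
    (∑ i, A i) ⊗ₖ B = ∑ i, (A i ⊗ₖ B) := by
  ext ⟨x, y⟩ ⟨x', y'⟩
  simp [Matrix.sum_apply, Finset.sum_mul]

lemma conjTranspose_kron (A : Matrix IA IA ℂ) (B : Matrix IB IB ℂ) :
    (A ⊗ₖ B)ᴴ = Aᴴ ⊗ₖ Bᴴ := by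
  ext ⟨x, y⟩ ⟨x', y'⟩
  simp [Matrix.conjTranspose_apply, star_mul']

lemma bigS_conj_mul {b : IA → IA → ℂ} (hb : ONB b) {S : IA → Matrix IB IB ℂ}
    (hS1 : ∀ i, (S i)ᴴ = S i) (hS2 : ∀ i, S i * S i = 1) :
    (∑ i, dm (b i) ⊗ₖ S i)ᴴ * (∑ i, dm (b i) ⊗ₖ S i) = 1 := by
  have hct : (∑ i, dm (b i) ⊗ₖ S i)ᴴ = ∑ i, dm (b i) ⊗ₖ S i := by
    rw [Matrix.conjTranspose_sum]
    apply Finset.sum_congr rfl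
    intro i _
    rw [conjTranspose_kron, (isHermitian_dm (b i)).eq, hS1 i]
  rw [hct, Finset.sum_mul_sum]
  have hterm : ∀ i j, (dm (b i) ⊗ₖ S i) * (dm (b j) ⊗ₖ S j)
      = if i = j then dm (b i) ⊗ₖ (1 : Matrix IB IB ℂ) else 0 := by
    intro i j
    rw [← Matrix.mul_kronecker_mul, hb.dm_mul_dm i j]
    by_cases h : i = j
    · subst h
      simp [hS2 i]
    · simp [h, Matrix.zero_kronecker]
  calc ∑ i, ∑ j, (dm (b i) ⊗ₖ S i) * (dm (b j) ⊗ₖ S j)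
      = ∑ i, ∑ j, (if i = j then dm (b i) ⊗ₖ (1 : Matrix IB IB ℂ) else 0) := by
        apply Finset.sum_congr rfl
        intro i _
        apply Finset.sum_congr rfl
        intro j _
        exact hterm i j
    _ = ∑ i, dm (b i) ⊗ₖ (1 : Matrix IB IB ℂ) := by
        apply Finset.sum_congr rfl
        intro i _
        simp
    _ = (∑ i, dm (b i)) ⊗ₖ (1 : Matrix IB IB ℂ) := (sum_kron _ _).symm
    _ = 1 := by rw [hb.sum_dm, Matrix.one_kronecker_one]

lemma trace_kron_dm (v : IA → ℂ) (S : Matrix IB IB ℂ) (Ψ : IA × IB → ℂ) :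
    ((dm v ⊗ₖ S) * dm Ψ).trace = (S * dm (contract v Ψ)).trace := by
  set E : Matrix (IA × IB) IB ℂ :=
    Matrix.of (fun p t => if p.2 = t then v p.1 else 0) with hEdef
  have h1 : E * S * Eᴴ = dm v ⊗ₖ S := by
    ext ⟨x, y⟩ ⟨x', y'⟩
    simp only [Matrix.mul_apply, Matrix.conjTranspose_apply, hEdef, Matrix.of_apply,
      Matrix.kroneckerMap_apply, dm, ite_mul, mul_ite, zero_mul, mul_zero,
      Complex.star_def, apply_ite (starRingEnd ℂ), map_zero,
      Finset.sum_ite_eq, Finset.sum_ite_eq', Finset.mem_univ, if_true]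
    ring
  have h2 : Eᴴ * dm Ψ * E = dm (contract v Ψ) := by
    ext t t'
    simp only [Matrix.mul_apply, Matrix.conjTranspose_apply, hEdef, Matrix.of_apply,
      dm, contract, Fintype.sum_prod_type, ite_mul, mul_ite, zero_mul, mul_zero,
      Complex.star_def, apply_ite (starRingEnd ℂ), map_zero, map_sum, _root_.map_mul,
      Finset.sum_ite_eq, Finset.sum_ite_eq', Finset.mem_univ, if_true,
      Finset.sum_mul, Finset.mul_sum]
    apply Finset.sum_congr rfl
    intro x _
    apply Finset.sum_congr rfl
    intro x' _
    simp only [Complex.conj_conj]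
    ring
  rw [← h1, ← h2]
  calc (E * S * Eᴴ * dm Ψ).trace = ((E * S) * (Eᴴ * dm Ψ)).trace := by
        simp only [Matrix.mul_assoc]
    _ = ((Eᴴ * dm Ψ) * (E * S)).trace := Matrix.trace_mul_comm _ _
    _ = ((Eᴴ * dm Ψ * E) * S).trace := by simp only [Matrix.mul_assoc]
    _ = (S * (Eᴴ * dm Ψ * E)).trace := Matrix.trace_mul_comm _ _

lemma master {b : IA → IA → ℂ} (hb : ONB b) {S : IA → Matrix IB IB ℂ}
    (hS1 : ∀ i, (S i)ᴴ = S i) (hS2 : ∀ i, S i * S i = 1) (Ψ Ψ' : IA × IB → ℂ) :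
    ∑ i, ((S i * (dm (contract (b i) Ψ) - dm (contract (b i) Ψ'))).trace).re
      ≤ traceNorm (dm Ψ - dm Ψ') := by
  have hH : (dm Ψ - dm Ψ').IsHermitian := (isHermitian_dm Ψ).sub (isHermitian_dm Ψ')
  have hSS : (∑ i, dm (b i) ⊗ₖ S i)ᴴ * (∑ i, dm (b i) ⊗ₖ S i) = 1 :=
    bigS_conj_mul hb hS1 hS2
  have htr : ((∑ i, dm (b i) ⊗ₖ S i) * (dm Ψ - dm Ψ')).trace
      = ∑ i, (S i * (dm (contract (b i) Ψ) - dm (contract (b i) Ψ'))).trace := by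
    rw [Matrix.sum_mul, Matrix.trace_sum]
    apply Finset.sum_congr rfl
    intro i _
    rw [Matrix.mul_sub, Matrix.mul_sub, Matrix.trace_sub, Matrix.trace_sub,
      trace_kron_dm, trace_kron_dm]
  have h2 := re_trace_mul_le_traceNorm hH hSS
  rw [htr, Complex.re_sum] at h2
  exact h2

lemma trace_dm (ψ : IB → ℂ) : (dm ψ).trace = braket ψ ψ := by
  simp [Matrix.trace, Matrix.diag, dm, braket, mul_comm]

lemma ONB.sum_trace_dm_contract {b : IA → IA → ℂ} (hb : ONB b) (Ψ : IA × IB → ℂ) :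
    ∑ i, (dm (contract (b i) Ψ)).trace = (dm Ψ).trace := by
  calc ∑ i, (dm (contract (b i) Ψ)).trace
      = ∑ i, ((dm (b i) ⊗ₖ (1 : Matrix IB IB ℂ)) * dm Ψ).trace := by
        apply Finset.sum_congr rfl
        intro i _
        rw [trace_kron_dm, Matrix.one_mul]
    _ = (((∑ i, dm (b i)) ⊗ₖ (1 : Matrix IB IB ℂ)) * dm Ψ).trace := by
        rw [sum_kron, Matrix.sum_mul, Matrix.trace_sum]
    _ = (dm Ψ).trace := by rw [hb.sum_dm, Matrix.one_kronecker_one, Matrix.one_mul]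

end Chunk3


section Chunk4

open Matrix
variable {IA IB : Type*} [Fintype IA] [DecidableEq IA] [Fintype IB] [DecidableEq IB]

lemma trace_dm' {J : Type*} [Fintype J] (ψ : J → ℂ) : (dm ψ).trace = braket ψ ψ := by
  simp [Matrix.trace, Matrix.diag, dm, braket, mul_comm]

lemma braket_self_eq (ψ : IB → ℂ) :
    braket ψ ψ = ((∑ x, Complex.normSq (ψ x) : ℝ) : ℂ) := by
  rw [braket, Complex.ofReal_sum]
  apply Finset.sum_congr rfl
  intro x _
  rw [mul_comm, Complex.mul_conj]

lemma prob_eq (v : IA → ℂ) (Ψ : IA × IB → ℂ) :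
    prob v Ψ = ∑ y, Complex.normSq (contract v Ψ y) := by
  rw [prob, braket_self_eq, Complex.ofReal_re]

lemma prob_nonneg (v : IA → ℂ) (Ψ : IA × IB → ℂ) : 0 ≤ prob v Ψ := by
  rw [prob_eq]
  exact Finset.sum_nonneg fun x _ => Complex.normSq_nonneg _

lemma braket_contract_eq (v : IA → ℂ) (Ψ : IA × IB → ℂ) :
    braket (contract v Ψ) (contract v Ψ) = ((prob v Ψ : ℝ) : ℂ) := by
  rw [prob, braket_self_eq, Complex.ofReal_re]

lemma contract_eq_zero {v : IA → ℂ} {Ψ : IA × IB → ℂ} (hp : prob v Ψ = 0) :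
    contract v Ψ = 0 := by
  rw [prob_eq] at hp
  funext y
  have h := (Finset.sum_eq_zero_iff_of_nonneg
    (fun x _ => Complex.normSq_nonneg (contract v Ψ x))).mp hp y (Finset.mem_univ y)
  exact Complex.normSq_eq_zero.mp h

lemma postState_of_prob_zero {v : IA → ℂ} {Ψ : IA × IB → ℂ} (hp : prob v Ψ = 0) :
    postState v Ψ = 0 := by
  funext y
  rw [postState]
  have := contract_eq_zero hp
  rw [this]
  simp

lemma dm_zero : dm (0 : IB → ℂ) = 0 := by
  ext x y
  simp [dm]

lemma braket_postState {v : IA → ℂ} {Ψ : IA × IB → ℂ} (hp : 0 < prob v Ψ) :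
    braket (postState v Ψ) (postState v Ψ) = 1 := by
  rw [braket]
  have h : ∀ y, conj (postState v Ψ y) * postState v Ψ y
      = ((((Real.sqrt (prob v Ψ))⁻¹)^2 : ℝ) : ℂ) *
        (conj (contract v Ψ y) * contract v Ψ y) := by
    intro y
    rw [postState, _root_.map_mul, map_inv₀, Complex.conj_ofReal]
    push_cast
    ring
  rw [Finset.sum_congr rfl (fun y _ => h y), ← Finset.mul_sum]
  have h2 : (∑ y, conj (contract v Ψ y) * contract v Ψ y) = ((prob v Ψ : ℝ) : ℂ) :=
    braket_contract_eq v Ψ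
  have h3 : ((Real.sqrt (prob v Ψ))⁻¹ ^ 2) * prob v Ψ = 1 := by
    rw [inv_pow, Real.sq_sqrt (le_of_lt hp)]
    exact inv_mul_cancel₀ (ne_of_gt hp)
  rw [h2, ← Complex.ofReal_mul, h3, Complex.ofReal_one]

lemma smul_dm_postState (v : IA → ℂ) (Ψ : IA × IB → ℂ) :
    ((prob v Ψ : ℝ) : ℂ) • dm (postState v Ψ) = dm (contract v Ψ) := by
  rcases eq_or_lt_of_le (prob_nonneg v Ψ) with hp | hp
  · rw [postState_of_prob_zero hp.symm, dm_zero, contract_eq_zero hp.symm, dm_zero, smul_zero]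
  · ext x y
    rw [Matrix.smul_apply, dm, dm, Matrix.of_apply, Matrix.of_apply, postState, postState,
      _root_.map_mul, map_inv₀, Complex.conj_ofReal, smul_eq_mul]
    have ha : ((Real.sqrt (prob v Ψ) : ℝ) : ℂ) ≠ 0 := by
      simp only [ne_eq, Complex.ofReal_eq_zero]
      exact Real.sqrt_ne_zero'.mpr hp
    have hpp : ((prob v Ψ : ℝ) : ℂ)
        = ((Real.sqrt (prob v Ψ) : ℝ) : ℂ) * ((Real.sqrt (prob v Ψ) : ℝ) : ℂ) := by
      rw [← Complex.ofReal_mul, Real.mul_self_sqrt (le_of_lt hp)]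
    rw [hpp]
    field_simp

end Chunk4


section Chunk5
open Matrix
variable {IA IB : Type*} [Fintype IA] [DecidableEq IA] [Fintype IB] [DecidableEq IB]

lemma ONB.sum_prob {b : IA → IA → ℂ} (hb : ONB b) (Ψ : IA × IB → ℂ)
    (hΨ : braket Ψ Ψ = 1) : ∑ i, prob (b i) Ψ = 1 := by
  have h := hb.sum_trace_dm_contract Ψ
  have h2 : ∑ i, braket (contract (b i) Ψ) (contract (b i) Ψ) = braket Ψ Ψ := by
    calc ∑ i, braket (contract (b i) Ψ) (contract (b i) Ψ)
        = ∑ i, (dm (contract (b i) Ψ)).trace :=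
          Finset.sum_congr rfl (fun i _ => (trace_dm' (contract (b i) Ψ)).symm)
      _ = (dm Ψ).trace := h
      _ = braket Ψ Ψ := trace_dm' Ψ
  have h3 := congrArg Complex.re h2
  rw [hΨ] at h3
  simpa [prob, Complex.re_sum] using h3

lemma E_post_mem (E : (IB → ℂ) → ℝ)
    (hE_range : ∀ ψ : IB → ℂ, braket ψ ψ = 1 → E ψ ∈ Set.Icc (0 : ℝ) 1)
    (hE_zero : E 0 = 0) (v : IA → ℂ) (Ψ : IA × IB → ℂ) :
    E (postState v Ψ) ∈ Set.Icc (0 : ℝ) 1 := by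
  rcases eq_or_lt_of_le (prob_nonneg v Ψ) with hp | hp
  · rw [postState_of_prob_zero hp.symm, hE_zero]
    exact ⟨le_refl 0, zero_le_one⟩
  · exact hE_range _ (braket_postState hp)

lemma avg_diff_le
    (E : (IB → ℂ) → ℝ) (f : ℝ → ℝ)
    (hf_concave : ConcaveOn ℝ (Set.Ici (0 : ℝ)) f)
    (hf_mono : MonotoneOn f (Set.Ici (0 : ℝ)))
    (hE_range : ∀ ψ : IB → ℂ, braket ψ ψ = 1 → E ψ ∈ Set.Icc (0 : ℝ) 1)
    (hE_zero : E 0 = 0)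
    (hE_cont : ∀ ψ ψ' : IB → ℂ, braket ψ ψ = 1 → braket ψ' ψ' = 1 →
      |E ψ - E ψ'| ≤ f (traceNorm (dm ψ - dm ψ')))
    (hE_bound : ∀ ψ : IB → ℂ, braket ψ ψ = 1 → E ψ ≤ f 1)
    {Ψ Ψ' : IA × IB → ℂ} (hΨ : braket Ψ Ψ = 1) (hΨ' : braket Ψ' Ψ' = 1)
    {b : IA → IA → ℂ} (hb : ONB b) :
    avgE E b Ψ - avgE E b Ψ' ≤
      f (2 * traceNorm (dm Ψ - dm Ψ')) + traceNorm (dm Ψ - dm Ψ') := by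
  classical
  set T := traceNorm (dm Ψ - dm Ψ') with hT
  set p : IA → ℝ := fun i => prob (b i) Ψ with hpdef
  set p' : IA → ℝ := fun i => prob (b i) Ψ' with hp'def
  set φ : IA → IB → ℂ := fun i => postState (b i) Ψ with hφdef
  set φ' : IA → IB → ℂ := fun i => postState (b i) Ψ' with hφ'def
  set c : IA → IB → ℂ := fun i => contract (b i) Ψ with hcdef
  set c' : IA → IB → ℂ := fun i => contract (b i) Ψ' with hc'def
  set t : IA → ℝ := fun i => traceNorm (dm (φ i) - dm (φ' i)) with ht
  have hHi : ∀ i, (dm (φ i) - dm (φ' i)).IsHermitian :=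
    fun i => (isHermitian_dm _).sub (isHermitian_dm _)
  have hHc : ∀ i, (dm (c i) - dm (c' i)).IsHermitian :=
    fun i => (isHermitian_dm _).sub (isHermitian_dm _)
  have hTnn : 0 ≤ T := traceNorm_nonneg' ((isHermitian_dm Ψ).sub (isHermitian_dm Ψ'))
  have htnn : ∀ i, 0 ≤ t i := fun i => traceNorm_nonneg' (hHi i)
  have hpsum : ∑ i, p i = 1 := hb.sum_prob Ψ hΨ
  have hpnn : ∀ i, 0 ≤ p i := fun i => prob_nonneg _ _
  have hp'nn : ∀ i, 0 ≤ p' i := fun i => prob_nonneg _ _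
  have htrc : ∀ i, ((dm (c i) - dm (c' i)).trace).re = p i - p' i := by
    intro i
    rw [Matrix.trace_sub, trace_dm', trace_dm', hcdef, hc'def]
    simp only [braket_contract_eq]
    rw [Complex.sub_re, Complex.ofReal_re, Complex.ofReal_re]
  have habs : ∑ i, |p i - p' i| ≤ T := by
    set ε : IA → ℝ := fun i => if p' i ≤ p i then (1 : ℝ) else -1 with hεdef
    set S : IA → Matrix IB IB ℂ := fun i => ((ε i : ℝ) : ℂ) • 1 with hSdef
    have hS1 : ∀ i, (S i)ᴴ = S i := by
      intro i
      rw [hSdef]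
      simp only
      rw [Matrix.conjTranspose_smul, Matrix.conjTranspose_one]
      congr 1
      simp [Complex.star_def, Complex.conj_ofReal]
    have hS2 : ∀ i, S i * S i = 1 := by
      intro i
      rw [hSdef]
      simp only
      rw [Matrix.smul_mul, Matrix.mul_smul, Matrix.one_mul, smul_smul, ← Complex.ofReal_mul]
      have : ε i * ε i = 1 := by
        rw [hεdef]
        by_cases h : p' i ≤ p i <;> simp [h]
      rw [this, Complex.ofReal_one, one_smul]
    have hmaster := master hb hS1 hS2 Ψ Ψ'
    have heval : ∀ i, ((S i * (dm (contract (b i) Ψ) - dm (contract (b i) Ψ'))).trace).re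
        = |p i - p' i| := by
      intro i
      rw [hSdef]
      simp only
      rw [Matrix.smul_mul, Matrix.one_mul, Matrix.trace_smul]
      have : (((ε i : ℝ) : ℂ) • ((dm (c i) - dm (c' i)).trace)).re
          = ε i * (p i - p' i) := by
        rw [smul_eq_mul, Complex.mul_re, Complex.ofReal_re, Complex.ofReal_im, htrc i]
        ring
      rw [this, hεdef]
      simp only
      by_cases h : p' i ≤ p i
      · rw [if_pos h, one_mul, abs_of_nonneg (by linarith)]
      · rw [if_neg h, abs_of_neg (by linarith)]
        ring
    calc ∑ i, |p i - p' i|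
        = ∑ i, ((S i * (dm (contract (b i) Ψ) - dm (contract (b i) Ψ'))).trace).re := by
          exact (Finset.sum_congr rfl (fun i _ => heval i)).symm
      _ ≤ T := hmaster
  have hsumtn : ∑ i, traceNorm (dm (c i) - dm (c' i)) ≤ T := by
    choose S hS1 hS2 hS3 using fun i => exists_sign_matrix (hHc i)
    have hmaster := master hb hS1 hS2 Ψ Ψ'
    calc ∑ i, traceNorm (dm (c i) - dm (c' i))
        = ∑ i, ((S i * (dm (contract (b i) Ψ) - dm (contract (b i) Ψ'))).trace).re :=
          Finset.sum_congr rfl (fun i _ => (hS3 i).symm)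
      _ ≤ T := hmaster
  have hsmul : ∀ i, ((p i : ℝ) : ℂ) • (dm (φ i) - dm (φ' i))
      = (dm (c i) - dm (c' i)) + (((p' i - p i : ℝ)) : ℂ) • dm (φ' i) := by
    intro i
    have h1 : ((p i : ℝ) : ℂ) • dm (φ i) = dm (c i) := smul_dm_postState (b i) Ψ
    have h2 : ((p' i : ℝ) : ℂ) • dm (φ' i) = dm (c' i) := smul_dm_postState (b i) Ψ'
    rw [smul_sub, h1, ← h2, Complex.ofReal_sub, sub_smul]
    abel
  have hφ'tn : ∀ i, traceNorm (dm (φ' i)) ≤ 1 := by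
    intro i
    rw [traceNorm_dm]
    rcases eq_or_lt_of_le (hp'nn i) with h | h
    · have h0 : φ' i = 0 := postState_of_prob_zero h.symm
      rw [h0]
      simp [braket]
    · rw [braket_postState h, Complex.one_re]
  have hstep4 : ∀ i, p i * t i ≤ traceNorm (dm (c i) - dm (c' i)) + |p i - p' i| := by
    intro i
    have h0 : p i * t i = traceNorm (((p i : ℝ) : ℂ) • (dm (φ i) - dm (φ' i))) := by
      rw [traceNorm_real_smul, abs_of_nonneg (hpnn i)]
    have hherm2 : ((((p' i - p i : ℝ)) : ℂ) • dm (φ' i)).IsHermitian := by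
      show _ᴴ = _
      rw [Matrix.conjTranspose_smul, (isHermitian_dm (φ' i)).eq]
      congr 1
      simp [Complex.star_def, Complex.conj_ofReal]
    calc p i * t i = traceNorm ((dm (c i) - dm (c' i))
          + (((p' i - p i : ℝ)) : ℂ) • dm (φ' i)) := by rw [h0, hsmul i]
      _ ≤ traceNorm (dm (c i) - dm (c' i))
          + traceNorm ((((p' i - p i : ℝ)) : ℂ) • dm (φ' i)) :=
          traceNorm_add_le (hHc i) hherm2
      _ ≤ traceNorm (dm (c i) - dm (c' i)) + |p i - p' i| := by
          rw [traceNorm_real_smul]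
          apply add_le_add_right
          calc |p' i - p i| * traceNorm (dm (φ' i)) ≤ |p' i - p i| * 1 :=
                mul_le_mul_of_nonneg_left (hφ'tn i) (abs_nonneg _)
            _ = |p i - p' i| := by rw [mul_one, abs_sub_comm]
  have hsum_pt : ∑ i, p i * t i ≤ 2 * T := by
    calc ∑ i, p i * t i
        ≤ ∑ i, (traceNorm (dm (c i) - dm (c' i)) + |p i - p' i|) :=
          Finset.sum_le_sum (fun i _ => hstep4 i)
      _ = (∑ i, traceNorm (dm (c i) - dm (c' i))) + ∑ i, |p i - p' i| :=
          Finset.sum_add_distrib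
      _ ≤ T + T := add_le_add hsumtn habs
      _ = 2 * T := by ring
  have hEmem : ∀ i, E (φ i) ∈ Set.Icc (0:ℝ) 1 := fun i => E_post_mem E hE_range hE_zero _ _
  have hE'mem : ∀ i, E (φ' i) ∈ Set.Icc (0:ℝ) 1 := fun i => E_post_mem E hE_range hE_zero _ _
  have hEdiff : ∀ i, p i * (E (φ i) - E (φ' i)) ≤ p i * f (t i) := by
    intro i
    rcases eq_or_lt_of_le (hpnn i) with hpi | hpi
    · rw [← hpi, zero_mul, zero_mul]
    · rcases eq_or_lt_of_le (hp'nn i) with hpi' | hpi'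
      · have hφ'0 : φ' i = 0 := postState_of_prob_zero hpi'.symm
        have hti : t i = 1 := by
          rw [ht]
          simp only
          rw [hφ'0, dm_zero, sub_zero, traceNorm_dm, braket_postState hpi, Complex.one_re]
        rw [hφ'0, hE_zero, sub_zero, hti]
        exact mul_le_mul_of_nonneg_left (hE_bound _ (braket_postState hpi)) (hpnn i)
      · apply mul_le_mul_of_nonneg_left _ (hpnn i)
        calc E (φ i) - E (φ' i) ≤ |E (φ i) - E (φ' i)| := le_abs_self _
          _ ≤ f (traceNorm (dm (φ i) - dm (φ' i))) :=
              hE_cont _ _ (braket_postState hpi) (braket_postState hpi')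
  have hjensen : ∑ i, p i * f (t i) ≤ f (∑ i, p i * t i) := by
    have := hf_concave.le_map_sum (t := Finset.univ) (fun i _ => hpnn i) hpsum
      (fun i _ => Set.mem_Ici.mpr (htnn i))
    simpa [smul_eq_mul] using this
  have hmono : f (∑ i, p i * t i) ≤ f (2 * T) := by
    apply hf_mono (Set.mem_Ici.mpr (Finset.sum_nonneg
      (fun i _ => mul_nonneg (hpnn i) (htnn i)))) (Set.mem_Ici.mpr (by linarith)) hsum_pt
  have hsecond : ∑ i, (p i - p' i) * E (φ' i) ≤ T := by
    calc ∑ i, (p i - p' i) * E (φ' i) ≤ ∑ i, |p i - p' i| := by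
          apply Finset.sum_le_sum
          intro i _
          calc (p i - p' i) * E (φ' i) ≤ |(p i - p' i) * E (φ' i)| := le_abs_self _
            _ = |p i - p' i| * |E (φ' i)| := abs_mul _ _
            _ ≤ |p i - p' i| * 1 := by
                apply mul_le_mul_of_nonneg_left _ (abs_nonneg _)
                rw [abs_of_nonneg (hE'mem i).1]
                exact (hE'mem i).2
            _ = |p i - p' i| := mul_one _
      _ ≤ T := habs
  have hsplit : avgE E b Ψ - avgE E b Ψ'
      = (∑ i, p i * (E (φ i) - E (φ' i))) + ∑ i, (p i - p' i) * E (φ' i) := by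
    rw [avgE, avgE, ← Finset.sum_add_distrib, ← Finset.sum_sub_distrib]
    apply Finset.sum_congr rfl
    intro i _
    ring
  rw [hsplit]
  calc (∑ i, p i * (E (φ i) - E (φ' i))) + ∑ i, (p i - p' i) * E (φ' i)
      ≤ (∑ i, p i * f (t i)) + T :=
        add_le_add (Finset.sum_le_sum (fun i _ => hEdiff i)) hsecond
    _ ≤ f (∑ i, p i * t i) + T := add_le_add_left hjensen T
    _ ≤ f (2 * T) + T := add_le_add_left hmono T

end Chunk5


section Chunk6
open Matrix
variable {IA IB : Type*} [Fintype IA] [DecidableEq IA] [Fintype IB] [DecidableEq IB]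

lemma ONB_std : ONB (fun i x : IA => if i = x then (1:ℂ) else 0) := by
  intro i j
  simp only [braket, apply_ite (starRingEnd ℂ), _root_.map_one, map_zero, ite_mul, one_mul,
    zero_mul]
  rw [Finset.sum_ite_eq Finset.univ i (fun x => if j = x then (1:ℂ) else 0)]
  simp [eq_comm]

lemma ONB.product {K : Type*} [Fintype K] [DecidableEq K] {q : K → Fin 2 → Fin 2 → ℂ}
    (hq : ∀ k, ONB (q k)) : ONB (productBasis q) := by
  intro i j
  have key : braket (productBasis q i) (productBasis q j)
      = ∏ k, braket (q k (i k)) (q k (j k)) := by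
    calc braket (productBasis q i) (productBasis q j)
        = ∑ x : K → Fin 2, ∏ k, (conj (q k (i k) (x k)) * q k (j k) (x k)) := by
          simp only [braket, productBasis, map_prod, ← Finset.prod_mul_distrib]
      _ = ∏ k, ∑ v : Fin 2, conj (q k (i k) v) * q k (j k) v := by
          rw [Finset.prod_univ_sum]
          rw [Fintype.piFinset_univ]
      _ = ∏ k, braket (q k (i k)) (q k (j k)) := rfl
  rw [key]
  by_cases h : i = j
  · subst h
    rw [if_pos rfl, Finset.prod_congr rfl (fun k _ => hq k (i k) (i k))]
    simp
  · obtain ⟨k0, hk0⟩ := Function.ne_iff.mp h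
    rw [if_neg h]
    apply Finset.prod_eq_zero (Finset.mem_univ k0)
    rw [hq k0 (i k0) (j k0), if_neg hk0]

lemma avgE_nonneg (E : (IB → ℂ) → ℝ)
    (hE_range : ∀ ψ : IB → ℂ, braket ψ ψ = 1 → E ψ ∈ Set.Icc (0 : ℝ) 1)
    (hE_zero : E 0 = 0) (b : IA → IA → ℂ) (Ψ : IA × IB → ℂ) :
    0 ≤ avgE E b Ψ :=
  Finset.sum_nonneg fun i _ =>
    mul_nonneg (prob_nonneg _ _) (E_post_mem E hE_range hE_zero _ _).1

lemma avgE_le_one (E : (IB → ℂ) → ℝ)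
    (hE_range : ∀ ψ : IB → ℂ, braket ψ ψ = 1 → E ψ ∈ Set.Icc (0 : ℝ) 1)
    (hE_zero : E 0 = 0) {b : IA → IA → ℂ} (hb : ONB b) {Ψ : IA × IB → ℂ}
    (hΨ : braket Ψ Ψ = 1) : avgE E b Ψ ≤ 1 := by
  calc avgE E b Ψ ≤ ∑ i, prob (b i) Ψ * 1 :=
      Finset.sum_le_sum fun i _ =>
        mul_le_mul_of_nonneg_left (E_post_mem E hE_range hE_zero _ _).2 (prob_nonneg _ _)
    _ = 1 := by
      simp only [mul_one]
      exact hb.sum_prob Ψ hΨ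

lemma sSup_pair {P : Type*} (pred : P → Prop) (g g' : P → ℝ) (δ : ℝ) (hδ : 0 ≤ δ)
    (hne : ∃ x, pred x)
    (h0' : ∀ x, pred x → 0 ≤ g' x) (h0 : ∀ x, pred x → 0 ≤ g x)
    (h1 : ∀ x, pred x → g x ≤ 1) (h1' : ∀ x, pred x → g' x ≤ 1)
    (hd : ∀ x, pred x → g x - g' x ≤ δ) (hd' : ∀ x, pred x → g' x - g x ≤ δ) :
    |sSup {r | ∃ x, pred x ∧ r = g x} - sSup {r | ∃ x, pred x ∧ r = g' x}| ≤ δ := by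
  obtain ⟨x₀, hx₀⟩ := hne
  have hBdd : BddAbove {r : ℝ | ∃ x, pred x ∧ r = g x} := by
    refine ⟨1, ?_⟩
    rintro r ⟨x, hx, rfl⟩
    exact h1 x hx
  have hBdd' : BddAbove {r : ℝ | ∃ x, pred x ∧ r = g' x} := by
    refine ⟨1, ?_⟩
    rintro r ⟨x, hx, rfl⟩
    exact h1' x hx
  have hle : 0 ≤ sSup {r : ℝ | ∃ x, pred x ∧ r = g x} :=
    le_trans (h0 x₀ hx₀) (le_csSup hBdd ⟨x₀, hx₀, rfl⟩)
  have hle' : 0 ≤ sSup {r : ℝ | ∃ x, pred x ∧ r = g' x} :=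
    le_trans (h0' x₀ hx₀) (le_csSup hBdd' ⟨x₀, hx₀, rfl⟩)
  rw [abs_sub_le_iff]
  constructor
  · have h2 : sSup {r : ℝ | ∃ x, pred x ∧ r = g x}
        ≤ sSup {r : ℝ | ∃ x, pred x ∧ r = g' x} + δ := by
      apply Real.sSup_le _ (by linarith)
      rintro r ⟨x, hx, rfl⟩
      have h3 : g' x ≤ sSup {r : ℝ | ∃ x, pred x ∧ r = g' x} := le_csSup hBdd' ⟨x, hx, rfl⟩
      have := hd x hx
      linarith
    linarith
  · have h2 : sSup {r : ℝ | ∃ x, pred x ∧ r = g' x}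
        ≤ sSup {r : ℝ | ∃ x, pred x ∧ r = g x} + δ := by
      apply Real.sSup_le _ (by linarith)
      rintro r ⟨x, hx, rfl⟩
      have h3 : g x ≤ sSup {r : ℝ | ∃ x, pred x ∧ r = g x} := le_csSup hBdd ⟨x, hx, rfl⟩
      have := hd' x hx
      linarith
    linarith

end Chunk6


end Helpers

/-- Continuity bound for the localizable multipartite entanglement and
multipartite entanglement of assistance: if `E` takes values in `[0,1]`, `E(0) = 0`, and `f`
is a concave monotonically increasing nonnegative function on `[0,∞)` with
`|E(ψ) − E(ψ')| ≤ f(‖ψ − ψ'‖₁)` and `E(ψ) ≤ f(1)` for unit vectors `ψ, ψ'`, then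
`|L^E(Ψ) − L^E(Ψ')| ≤ f(2‖Ψ − Ψ'‖₁) + ‖Ψ − Ψ'‖₁`, and likewise for `L^E_global`. -/
theorem localizable_entanglement_continuity
    (NA : ℕ) (hNA : 0 < NA) {IB : Type*} [Fintype IB] [DecidableEq IB]
    (E : (IB → ℂ) → ℝ) (f : ℝ → ℝ)
    (hf_nonneg : ∀ x : ℝ, 0 ≤ x → 0 ≤ f x)
    (hf_concave : ConcaveOn ℝ (Set.Ici (0 : ℝ)) f)
    (hf_mono : MonotoneOn f (Set.Ici (0 : ℝ)))
    (hE_range : ∀ ψ : IB → ℂ, braket ψ ψ = 1 → E ψ ∈ Set.Icc (0 : ℝ) 1)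
    (hE_zero : E 0 = 0)
    (hE_cont : ∀ ψ ψ' : IB → ℂ, braket ψ ψ = 1 → braket ψ' ψ' = 1 →
      |E ψ - E ψ'| ≤ f (traceNorm (dm ψ - dm ψ')))
    (hE_bound : ∀ ψ : IB → ℂ, braket ψ ψ = 1 → E ψ ≤ f 1)
    (Ψ Ψ' : (Fin NA → Fin 2) × IB → ℂ)
    (hΨ : braket Ψ Ψ = 1) (hΨ' : braket Ψ' Ψ' = 1) :
    |Lloc E Ψ - Lloc E Ψ'| ≤
      f (2 * traceNorm (dm Ψ - dm Ψ')) + traceNorm (dm Ψ - dm Ψ') ∧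
    |Lglobal E Ψ - Lglobal E Ψ'| ≤
      f (2 * traceNorm (dm Ψ - dm Ψ')) + traceNorm (dm Ψ - dm Ψ') := by
  have hTnn : 0 ≤ traceNorm (dm Ψ - dm Ψ') :=
    traceNorm_nonneg' ((isHermitian_dm Ψ).sub (isHermitian_dm Ψ'))
  have hδ : 0 ≤ f (2 * traceNorm (dm Ψ - dm Ψ')) + traceNorm (dm Ψ - dm Ψ') :=
    add_nonneg (hf_nonneg _ (by linarith)) hTnn
  have hsym : traceNorm (dm Ψ' - dm Ψ) = traceNorm (dm Ψ - dm Ψ') := by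
    rw [← neg_sub, traceNorm_neg]
  constructor
  · refine sSup_pair (fun q : Fin NA → Fin 2 → Fin 2 → ℂ => ∀ k, ONB (q k))
      (fun q => avgE E (productBasis q) Ψ) (fun q => avgE E (productBasis q) Ψ')
      _ hδ ⟨fun _ => fun i x => if i = x then 1 else 0, fun _ => ONB_std⟩
      ?_ ?_ ?_ ?_ ?_ ?_
    · intro q _
      exact avgE_nonneg E hE_range hE_zero _ _
    · intro q _
      exact avgE_nonneg E hE_range hE_zero _ _
    · intro q hq
      exact avgE_le_one E hE_range hE_zero (ONB.product hq) hΨ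
    · intro q hq
      exact avgE_le_one E hE_range hE_zero (ONB.product hq) hΨ'
    · intro q hq
      exact avg_diff_le E f hf_concave hf_mono hE_range hE_zero hE_cont hE_bound
        hΨ hΨ' (ONB.product hq)
    · intro q hq
      have h := avg_diff_le E f hf_concave hf_mono hE_range hE_zero hE_cont hE_bound
        hΨ' hΨ (ONB.product hq)
      rwa [hsym] at h
  · refine sSup_pair (fun b : (Fin NA → Fin 2) → (Fin NA → Fin 2) → ℂ => ONB b)
      (fun b => avgE E b Ψ) (fun b => avgE E b Ψ')
      _ hδ ⟨fun i x => if i = x then 1 else 0, ONB_std⟩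
      ?_ ?_ ?_ ?_ ?_ ?_
    · intro b _
      exact avgE_nonneg E hE_range hE_zero _ _
    · intro b _
      exact avgE_nonneg E hE_range hE_zero _ _
    · intro b hb
      exact avgE_le_one E hE_range hE_zero hb hΨ
    · intro b hb
      exact avgE_le_one E hE_range hE_zero hb hΨ'
    · intro b hb
      exact avg_diff_le E f hf_concave hf_mono hE_range hE_zero hE_cont hE_bound hΨ hΨ' hb
    · intro b hb
      have h := avg_diff_le E f hf_concave hf_mono hE_range hE_zero hE_cont hE_bound
        hΨ' hΨ hb
      rwa [hsym] at h


end QIpaper
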